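/- The set Δ of all 1/2-derivations of the Witt algebra W is closed under composition, composition of 1/2-derivations of W is commutative, and Δ, with pointwise addition and scalar multiplication and composition as product, is an associative commutative complex algebra isomorphic to the Laurent polynomial algebra ℒ (the isomorphism sends the class of e_k to the map e_i ↦ e_{i+k}). -/

import Mathlib

/-- The Witt algebra bracket on the space `ℤ →₀ ℂ` with basis `e i = single i 1`,
given by `[e i, e j] = (i - j) e (i+j)`. -/
noncomputable def wittBracket (f g : ℤ →₀ ℂ) : ℤ →₀ ℂ :=
  f.sum fun i a => g.sum fun j b =>
    (a * b * ((i : ℂ) - (j : ℂ))) • Finsupp.single (i + j) (1 : ℂ)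

/-- A 1/2-derivation of the Witt algebra, as an endomorphism of `ℤ →₀ ℂ`. -/
def IsHalfDerWitt (φ : Module.End ℂ (ℤ →₀ ℂ)) : Prop :=
  ∀ x y : ℤ →₀ ℂ, φ (wittBracket x y) =
    (1 / 2 : ℂ) • (wittBracket (φ x) y + wittBracket x (φ y))

/-! Write `a i m` for the `e m`-coefficient of `φ (e i)`. The 1/2-derivation identity on
`(e i, e 0)` gives `(2i - m) (a i m - a 0 (m - i)) = 0`, and on `(e (i + t), e (-t))` it recovers
the diagonal `m = 2i` for any `t` with `t`, `i + t`, `i + 2t` nonzero. Hence `φ` is multiplication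
by the Laurent polynomial `φ (e 0)` on `W ≅ ℒ`; conversely every such multiplication is a
1/2-derivation, so the 1/2-derivations form a copy of `ℒ` inside `End W`. -/

open Finsupp

lemma wittBracket_single_single (i j : ℤ) :
    wittBracket (single i 1) (single j 1) = ((i : ℂ) - j) • single (i + j) 1 := by
  rw [wittBracket, sum_single_index (by simp), sum_single_index (by simp), one_mul, one_mul]

lemma wittBracket_single_right_apply (x : ℤ →₀ ℂ) (j m : ℤ) :
    wittBracket x (single j 1) m = ((m - 2 * j : ℤ) : ℂ) * x (m - j) := by
  rw [wittBracket, Finsupp.sum_apply, sum_eq_single (m - j)]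
  · rw [sum_single_index (by simp), sub_add_cancel, Finsupp.smul_apply, single_eq_same,
      smul_eq_mul]
    push_cast
    ring
  · intro i _ hi
    rw [sum_single_index (by simp), Finsupp.smul_apply, single_eq_of_ne (by omega), smul_zero]
  · simp

lemma wittBracket_single_left_apply (i : ℤ) (y : ℤ →₀ ℂ) (m : ℤ) :
    wittBracket (single i 1) y m = ((2 * i - m : ℤ) : ℂ) * y (m - i) := by
  rw [wittBracket, sum_single_index (by simp), Finsupp.sum_apply, sum_eq_single (m - i)]
  · rw [add_sub_cancel, Finsupp.smul_apply, single_eq_same, smul_eq_mul]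
    push_cast
    ring
  · intro j _ hj
    rw [Finsupp.smul_apply, single_eq_of_ne (by omega), smul_zero]
  · simp

noncomputable def wittBracketₗ : (ℤ →₀ ℂ) →ₗ[ℂ] (ℤ →₀ ℂ) →ₗ[ℂ] (ℤ →₀ ℂ) :=
  linearCombination ℂ fun i =>
    linearCombination ℂ fun j => ((i : ℂ) - j) • single (i + j) (1 : ℂ)

lemma wittBracketₗ_apply (x y : ℤ →₀ ℂ) : wittBracketₗ x y = wittBracket x y := by
  simp only [wittBracketₗ, wittBracket, linearCombination_apply, LinearMap.finsupp_sum_apply,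
    LinearMap.smul_apply, smul_sum, smul_smul]
  refine sum_congr fun i _ => sum_congr fun j _ => ?_
  ring_nf

lemma isHalfDerWitt_iff_single (φ : Module.End ℂ (ℤ →₀ ℂ)) :
    IsHalfDerWitt φ ↔ ∀ i j : ℤ, φ (wittBracket (single i 1) (single j 1)) =
      (1 / 2 : ℂ) • (wittBracket (φ (single i 1)) (single j 1) +
        wittBracket (single i 1) (φ (single j 1))) := by
  refine ⟨fun h i j => h _ _, fun h x y => ?_⟩
  have key : wittBracketₗ.compr₂ φ =
      (1 / 2 : ℂ) • (wittBracketₗ.comp φ + wittBracketₗ.compl₂ φ) := by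
    ext i j : 4
    simpa [wittBracketₗ_apply] using h i j
  simpa [wittBracketₗ_apply] using LinearMap.congr_fun₂ key x y

/-- The 1/2-derivation identity on basis vectors, where `a i m` is the `e m`-coefficient
of `φ (e i)`. -/
def IsWittHalfDerCoeff (a : ℤ → ℤ → ℂ) : Prop :=
  ∀ i j m : ℤ, ((i : ℂ) - j) * a (i + j) m =
    1 / 2 * (((m - 2 * j : ℤ) : ℂ) * a i (m - j) + ((2 * i - m : ℤ) : ℂ) * a j (m - i))

lemma isHalfDerWitt_iff_coeff (φ : Module.End ℂ (ℤ →₀ ℂ)) :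
    IsHalfDerWitt φ ↔ IsWittHalfDerCoeff fun i m => φ (single i 1) m := by
  rw [isHalfDerWitt_iff_single]
  refine forall₂_congr fun i j => ?_
  simp only [wittBracket_single_single, map_smul, Finsupp.ext_iff, Finsupp.smul_apply,
    Finsupp.add_apply, smul_eq_mul, wittBracket_single_right_apply, wittBracket_single_left_apply]

theorem IsWittHalfDerCoeff.eq_shift {a : ℤ → ℤ → ℂ} (ha : IsWittHalfDerCoeff a) (i m : ℤ) :
    a i m = a 0 (m - i) := by
  have off_diag : ∀ i m, m ≠ 2 * i → a i m = a 0 (m - i) := by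
    intro i m hm
    have h := ha i 0 m
    have hne : ((2 * i - m : ℤ) : ℂ) ≠ 0 := by exact_mod_cast sub_ne_zero.mpr hm.symm
    simp only [add_zero, sub_zero, Int.cast_zero, mul_zero] at h
    refine mul_left_cancel₀ hne ?_
    push_cast at h ⊢
    linear_combination 2 * h
  rcases ne_or_eq m (2 * i) with hm | rfl
  · exact off_diag i m hm
  -- `t ≠ 0` and `i + t ≠ 0` keep both terms on the right off the diagonal.
  obtain ⟨t, ht, hit, hi2t⟩ : ∃ t : ℤ, t ≠ 0 ∧ i + t ≠ 0 ∧ i + 2 * t ≠ 0 := by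
    rcases le_or_gt 0 i with hi | hi
    · exact ⟨1, by omega⟩
    · exact ⟨1 - i, by omega⟩
  have h := ha (i + t) (-t) (2 * i)
  rw [off_diag (i + t) _ (by omega), off_diag (-t) _ (by omega)] at h
  rw [add_neg_cancel_right, show 2 * i - -t - (i + t) = i by ring,
    show 2 * i - (i + t) - -t = i by ring] at h
  rw [show 2 * i - i = i by ring]
  have hne : ((i + 2 * t : ℤ) : ℂ) ≠ 0 := by exact_mod_cast hi2t
  refine mul_left_cancel₀ hne ?_
  push_cast at h ⊢
  linear_combination h

noncomputable def laurentMul : LaurentPolynomial ℂ →ₐ[ℂ] Module.End ℂ (ℤ →₀ ℂ) :=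
  ((AddMonoidAlgebra.coeffLinearEquiv ℂ).conjAlgEquiv ℂ).toAlgHom.comp
    (Algebra.lmul ℂ (LaurentPolynomial ℂ))

lemma laurentMul_apply (p : LaurentPolynomial ℂ) (x : ℤ →₀ ℂ) :
    laurentMul p x = (p * AddMonoidAlgebra.ofCoeff x).coeff := rfl

lemma laurentMul_injective : Function.Injective laurentMul :=
  fun _ _ h => Algebra.lmul_injective (R := ℂ) <|
    ((AddMonoidAlgebra.coeffLinearEquiv ℂ).conjAlgEquiv ℂ).injective h

lemma laurentMul_T (k : ℤ) :
    laurentMul (LaurentPolynomial.T k) = lmapDomain ℂ ℂ (fun i : ℤ => i + k) := by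
  ext n : 2
  simp only [LinearMap.comp_apply, laurentMul_apply, lsingle_apply, lmapDomain_apply,
    mapDomain_single]
  rw [← AddMonoidAlgebra.single.eq_1, LaurentPolynomial.T, AddMonoidAlgebra.single_mul_single,
    add_comm, one_mul]
  rfl

lemma laurentMul_single_apply (p : LaurentPolynomial ℂ) (i m : ℤ) :
    laurentMul p (single i 1) m = p.coeff (m - i) := by
  rw [laurentMul_apply, ← AddMonoidAlgebra.single.eq_1, AddMonoidAlgebra.coeff_mul_single_apply,
    mul_one, sub_eq_add_neg]

lemma isHalfDerWitt_laurentMul (p : LaurentPolynomial ℂ) : IsHalfDerWitt (laurentMul p) := by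
  rw [isHalfDerWitt_iff_coeff]
  intro i j m
  simp only [laurentMul_single_apply, show m - j - i = m - (i + j) by ring,
    show m - i - j = m - (i + j) by ring]
  push_cast
  ring

lemma eq_laurentMul_of_isHalfDerWitt {φ : Module.End ℂ (ℤ →₀ ℂ)} (hφ : IsHalfDerWitt φ) :
    φ = laurentMul (AddMonoidAlgebra.ofCoeff (φ (single 0 1))) := by
  ext i m
  simp only [LinearMap.comp_apply, lsingle_apply, laurentMul_single_apply]
  exact ((isHalfDerWitt_iff_coeff φ).mp hφ).eq_shift i m

lemma mem_range_laurentMul_iff (φ : Module.End ℂ (ℤ →₀ ℂ)) :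
    φ ∈ Set.range laurentMul ↔ IsHalfDerWitt φ :=
  ⟨by rintro ⟨p, rfl⟩; exact isHalfDerWitt_laurentMul p,
    fun hφ => ⟨_, (eq_laurentMul_of_isHalfDerWitt hφ).symm⟩⟩

/-- The 1/2-derivations of the Witt algebra are closed under
composition, commute with each other under composition, and form (with the
pointwise module structure and composition) a commutative associative complex
algebra isomorphic to the Laurent polynomial algebra, the isomorphism sending
`T k` to the shift `e i ↦ e (i+k)`. -/
theorem witt_half_derivations_algebra :
    (∀ φ ψ : Module.End ℂ (ℤ →₀ ℂ),
        IsHalfDerWitt φ → IsHalfDerWitt ψ → IsHalfDerWitt (φ * ψ)) ∧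
    (∀ φ ψ : Module.End ℂ (ℤ →₀ ℂ),
        IsHalfDerWitt φ → IsHalfDerWitt ψ → φ * ψ = ψ * φ) ∧
    ∃ F : LaurentPolynomial ℂ →ₐ[ℂ] Module.End ℂ (ℤ →₀ ℂ),
      Function.Injective F ∧
      (∀ φ : Module.End ℂ (ℤ →₀ ℂ), φ ∈ Set.range F ↔ IsHalfDerWitt φ) ∧
      (∀ k : ℤ, F (LaurentPolynomial.T k) =
        Finsupp.lmapDomain ℂ ℂ (fun i : ℤ => i + k)) := by
  refine ⟨?_, ?_, laurentMul, laurentMul_injective, mem_range_laurentMul_iff, laurentMul_T⟩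
  · intro φ ψ hφ hψ
    obtain ⟨p, rfl⟩ := (mem_range_laurentMul_iff φ).mpr hφ
    obtain ⟨q, rfl⟩ := (mem_range_laurentMul_iff ψ).mpr hψ
    rw [← map_mul]
    exact isHalfDerWitt_laurentMul _
  · intro φ ψ hφ hψ
    obtain ⟨p, rfl⟩ := (mem_range_laurentMul_iff φ).mpr hφ
    obtain ⟨q, rfl⟩ := (mem_range_laurentMul_iff ψ).mpr hψ
    rw [← map_mul, ← map_mul, mul_comm]
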